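/- Let X be any set of three points in generic position in P^1 × P^1 × P^1. Then the multigraded piece (I_X)_{(1,1,1)} (of dimension 8 − 3 = 5) is not equal to R_{e_1}(I_X)_{(0,1,1)} + R_{e_2}(I_X)_{(1,0,1)} + R_{e_3}(I_X)_{(1,1,0)}; in fact dim_k(R_{e_1}(I_X)_{(0,1,1)} + R_{e_2}(I_X)_{(1,0,1)} + R_{e_3}(I_X)_{(1,1,0)}) ≤ 4. Consequently I_X has a minimal generator in degree (1,1,1). -/

import Mathlib

/-!
Let `p` be the point of `ℙ¹ × ℙ¹ × ℙ¹` which, in every factor, has cross-ratio `2` with respect to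
the three coordinates of `X` there. Genericity forces these coordinates to be pairwise distinct
(`(I_X)_{2e_i} = 0`) and makes `(I_X)_{e_i + e_j}`, `i ≠ j`, a line spanned by one bilinear form:
the graph of the Möbius map sending the `i`-th coordinates of `X` to the `j`-th ones. Möbius maps
preserve cross-ratios, so all three bilinear forms vanish at `p`; every other piece of `I_X` below
`(1,1,1)` is zero. Hence everything generated by lower-degree pieces vanishes at `p`, whereas the
product of the linear forms cutting out the `0`-th coordinate of `P 0`, the `1`-st of `P 1` and the
`2`-nd of `P 2` lies in `(I_X)_{(1,1,1)}` and does not vanish at `p`.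
-/


open MvPolynomial

namespace MultiProjPoints

/-- The variable set of the multigraded coordinate ring of
`ℙ^{n 0} × ⋯ × ℙ^{n (k-1)}`: variables `x_{i,j}` with `i : Fin k`, `0 ≤ j ≤ n i`. -/
abbrev Var (k : ℕ) (n : Fin k → ℕ) := Σ i : Fin k, Fin (n i + 1)

/-- The `ℕ^k`-grading weight: `deg x_{i,j} = e_i`. -/
def wt (k : ℕ) (n : Fin k → ℕ) : Var k n → (Fin k → ℕ) := fun v => Pi.single v.1 1

/-- The `i`-th standard basis vector of `ℕ^k`. -/
def e {k : ℕ} (l : Fin k) : Fin k → ℕ := Pi.single l 1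

variable (K : Type) [Field K]

/-- The graded piece `R_d` of the `ℕ^k`-graded polynomial ring. -/
noncomputable def piece (k : ℕ) (n : Fin k → ℕ) (d : Fin k → ℕ) :
    Submodule K (MvPolynomial (Var k n) K) :=
  weightedHomogeneousSubmodule K (wt k n) d

/-- `N(d) = ∏ binom (n i + d i) (d i)`, the dimension of `R_d`. -/
def NN (k : ℕ) (n : Fin k → ℕ) (d : Fin k → ℕ) : ℕ := ∏ i, (n i + d i).choose (d i)

/-- A (representative of a) point of `ℙ^{n 0} × ⋯ × ℙ^{n (k-1)}`. -/
def PointRep (k : ℕ) (n : Fin k → ℕ) := (i : Fin k) → Fin (n i + 1) → K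

/-- A valid representative: every coordinate block is nonzero. -/
def IsRep {k : ℕ} {n : Fin k → ℕ} (P : PointRep K k n) : Prop := ∀ i, P i ≠ 0

/-- Two representatives define the same point of multi-projective space. -/
def ProjEq {k : ℕ} {n : Fin k → ℕ} (P Q : PointRep K k n) : Prop :=
  ∀ i, ∃ c : K, c ≠ 0 ∧ P i = c • Q i

/-- A tuple of representatives giving `s` distinct points. -/
def SPoints {k : ℕ} {n : Fin k → ℕ} {s : ℕ} (P : Fin s → PointRep K k n) : Prop :=
  (∀ a, IsRep K (P a)) ∧ ∀ a b, a ≠ b → ¬ ProjEq K (P a) (P b)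

/-- The defining ideal `I_X` of the set of points: all polynomials vanishing on
the multi-cone over the points, i.e. the intersection of the point ideals. -/
noncomputable def idealOfPoints {k : ℕ} {n : Fin k → ℕ} {s : ℕ}
    (P : Fin s → PointRep K k n) : Ideal (MvPolynomial (Var k n) K) :=
  ⨅ (a : Fin s), ⨅ (c : Fin k → K),
    RingHom.ker (eval (fun v : Var k n => c v.1 * P a v.1 v.2))

/-- The degree-`d` piece `I_d` of an ideal, as a `K`-subspace. -/
noncomputable def idealPiece {k : ℕ} {n : Fin k → ℕ}
    (I : Ideal (MvPolynomial (Var k n) K)) (d : Fin k → ℕ) :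
    Submodule K (MvPolynomial (Var k n) K) :=
  (Submodule.restrictScalars K I) ⊓ piece K k n d

/-- The multigraded Hilbert function of `X`:
`H_X(d) = dim (R/I_X)_d = dim R_d - dim (I_X)_d`. -/
noncomputable def hilbert {k : ℕ} {n : Fin k → ℕ} {s : ℕ}
    (P : Fin s → PointRep K k n) (d : Fin k → ℕ) : ℕ :=
  NN k n d - Module.finrank K (idealPiece K (idealOfPoints K P) d)

/-- Generic position: `s` distinct points whose Hilbert function is maximal. -/
def GenericPosition {k : ℕ} {n : Fin k → ℕ} {s : ℕ} (P : Fin s → PointRep K k n) : Prop :=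
  SPoints K P ∧ ∀ d : Fin k → ℕ, hilbert K P d = min (NN k n d) s

/-- `R_{e_l}·V`: the span of all products of a variable of degree `e_l`
with an element of `V`. -/
noncomputable def mulSpan {k : ℕ} {n : Fin k → ℕ} (l : Fin k)
    (V : Submodule K (MvPolynomial (Var k n) K)) :
    Submodule K (MvPolynomial (Var k n) K) :=
  Submodule.span K {g | ∃ (m : Fin (n l + 1)) (f : MvPolynomial (Var k n) K),
    f ∈ V ∧ g = X (⟨l, m⟩ : Var k n) * f}

/-- `D = min { i ∈ ℕ^k | N(i) > s }` (minimal elements for the componentwise order). -/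
def Dset (k : ℕ) (n : Fin k → ℕ) (s : ℕ) : Set (Fin k → ℕ) :=
  {i | s < NN k n i ∧ ∀ j : Fin k → ℕ, s < NN k n j → j ≤ i → j = i}

/-- The irrelevant maximal ideal of `R`, generated by all the variables. -/
noncomputable def irrelevant (k : ℕ) (n : Fin k → ℕ) : Ideal (MvPolynomial (Var k n) K) :=
  Ideal.span (Set.range (X : Var k n → MvPolynomial (Var k n) K))

section Graded

variable {K : Type} [Field K] {k : ℕ} {n : Fin k → ℕ}

lemma weight_wt_apply (m : Var k n →₀ ℕ) (i : Fin k) :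
    Finsupp.weight (wt k n) m i = ∑ j, m ⟨i, j⟩ := by
  classical
  rw [Finsupp.weight_eq_sum, Finset.sum_apply, Fintype.sum_sigma]
  simp [wt, Pi.single_apply, Finset.sum_ite_eq]

lemma piece_le_homogeneousSubmodule (d : Fin k → ℕ) :
    piece K k n d ≤ homogeneousSubmodule (Var k n) K (∑ i, d i) := by
  intro f hf m hm
  simp only [← hf hm, weight_wt_apply]
  simp [Finsupp.weight_eq_sum, Fintype.sum_sigma]

instance (d : Fin k → ℕ) : FiniteDimensional K (piece K k n d) :=
  have := Module.Finite.iff_fg.mpr (homogeneousSubmodule_fg (σ := Var k n) K (∑ i, d i))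
  Submodule.finiteDimensional_of_le (piece_le_homogeneousSubmodule d)

instance (I : Ideal (MvPolynomial (Var k n) K)) (d : Fin k → ℕ) :
    FiniteDimensional K (idealPiece K I d) :=
  Submodule.finiteDimensional_of_le inf_le_right

lemma mul_mem_piece {d d' : Fin k → ℕ} {f g : MvPolynomial (Var k n) K}
    (hf : f ∈ piece K k n d) (hg : g ∈ piece K k n d') : f * g ∈ piece K k n (d + d') :=
  IsWeightedHomogeneous.mul hf hg

lemma eval_scale_of_mem_piece {d : Fin k → ℕ} {f : MvPolynomial (Var k n) K}
    (hf : f ∈ piece K k n d) (c : Fin k → K) (x : Var k n → K) :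
    eval (fun v => c v.1 * x v) f = (∏ i, c i ^ d i) * eval x f := by
  conv_lhs => rw [← support_sum_monomial_coeff f]
  conv_rhs => rw [← support_sum_monomial_coeff f]
  simp only [map_sum, eval_monomial, Finset.mul_sum]
  refine Finset.sum_congr rfl fun m hm => ?_
  rw [Finsupp.prod_fintype _ _ (fun _ => pow_zero _),
    Finsupp.prod_fintype _ _ (fun _ => pow_zero _), ← hf (mem_support_iff.mp hm)]
  simp only [mul_pow, Finset.prod_mul_distrib, weight_wt_apply, ← Finset.prod_pow_eq_pow_sum,
    Fintype.prod_sigma]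
  ring

end Graded

section Points

variable {K : Type} [Field K] {k : ℕ} {n : Fin k → ℕ} {s : ℕ}

noncomputable def evalAt (p : PointRep K k n) : MvPolynomial (Var k n) K →+* K :=
  eval fun v => p v.1 v.2

@[simp]
lemma evalAt_C (p : PointRep K k n) (c : K) : evalAt p (C c) = c :=
  eval_C c

lemma mem_idealPiece_idealOfPoints_iff (P : Fin s → PointRep K k n) {d : Fin k → ℕ}
    {f : MvPolynomial (Var k n) K} (hf : f ∈ piece K k n d) :
    f ∈ idealPiece K (idealOfPoints K P) d ↔ ∀ a, evalAt (P a) f = 0 := by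
  simp only [idealPiece, idealOfPoints, Submodule.mem_inf, Submodule.restrictScalars_mem,
    Submodule.mem_iInf, RingHom.mem_ker, hf, and_true]
  refine ⟨fun h a => by simpa [evalAt] using h a 1, fun h a c => ?_⟩
  rw [eval_scale_of_mem_piece hf, ← evalAt, h a, mul_zero]

lemma NN_pos (d : Fin k → ℕ) : 0 < NN k n d :=
  Finset.prod_pos fun _ _ => Nat.choose_pos (Nat.le_add_left _ _)

lemma GenericPosition.finrank_idealPiece {P : Fin s → PointRep K k n} (hP : GenericPosition K P)
    (hs : 0 < s) (d : Fin k → ℕ) :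
    Module.finrank K (idealPiece K (idealOfPoints K P) d) = NN k n d - s := by
  have h := hP.2 d
  have := NN_pos (n := n) d
  simp only [hilbert] at h
  omega

lemma GenericPosition.idealPiece_eq_bot {P : Fin s → PointRep K k n} (hP : GenericPosition K P)
    {d : Fin k → ℕ} (hd : NN k n d ≤ s) : idealPiece K (idealOfPoints K P) d = ⊥ := by
  refine Submodule.finrank_eq_zero.mp ?_
  rw [hP.finrank_idealPiece ((NN_pos d).trans_le hd)]
  omega

end Points

section MulSpan

variable {K : Type} [Field K] {k : ℕ} {n : Fin k → ℕ}

lemma mulSpan_le_restrictScalars {l : Fin k} {V : Submodule K (MvPolynomial (Var k n) K)}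
    {I : Ideal (MvPolynomial (Var k n) K)} (h : V ≤ I.restrictScalars K) :
    mulSpan K l V ≤ I.restrictScalars K :=
  Submodule.span_le.mpr fun _ ⟨_, _, hf, hg⟩ => hg ▸ I.mul_mem_left _ (h hf)

lemma mulSpan_idealPiece_le (I : Ideal (MvPolynomial (Var k n) K)) {l : Fin k}
    {d d' : Fin k → ℕ} (h : e l + d = d') : mulSpan K l (idealPiece K I d) ≤ idealPiece K I d' :=
  Submodule.span_le.mpr fun _ ⟨_, _, hf, hg⟩ =>
    hg ▸ ⟨I.mul_mem_left _ hf.1, h ▸ mul_mem_piece (isWeightedHomogeneous_X K _ _) hf.2⟩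

end MulSpan

section ProjectiveLine

variable {K : Type} [Field K] {k : ℕ}

def bracket (p q : Fin 2 → K) : K := p 0 * q 1 - p 1 * q 0

lemma bracket_self (p : Fin 2 → K) : bracket p p = 0 := by
  rw [bracket, mul_comm, sub_self]

lemma bracket_comm (p q : Fin 2 → K) : bracket p q = -bracket q p := by
  simp only [bracket]; ring

noncomputable def linearForm (i : Fin k) (u : Fin 2 → K) : MvPolynomial (Var k fun _ => 1) K :=
  C (u 1) * X ⟨i, 0⟩ - C (u 0) * X ⟨i, 1⟩

@[simp]
lemma evalAt_linearForm (p : PointRep K k fun _ => 1) (i : Fin k) (u : Fin 2 → K) :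
    evalAt p (linearForm i u) = bracket (p i) u := by
  simp only [evalAt, linearForm, bracket, map_sub, map_mul, eval_C, eval_X]
  ring

lemma linearForm_mem_piece (i : Fin k) (u : Fin 2 → K) :
    linearForm i u ∈ piece K k (fun _ => 1) (e i) :=
  ((isWeightedHomogeneous_X K _ _).C_mul _).sub ((isWeightedHomogeneous_X K _ _).C_mul _)

lemma linearForm_ne_zero (i : Fin k) {u : Fin 2 → K} (hu : u ≠ 0) : linearForm i u ≠ 0 := by
  intro h
  have h₀ := evalAt_linearForm (fun _ => ![1, 0]) i u
  have h₁ := evalAt_linearForm (fun _ => ![0, 1]) i u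
  rw [h, map_zero] at h₀ h₁
  simp only [bracket, Matrix.cons_val_zero, Matrix.cons_val_one, one_mul, zero_mul, sub_zero,
    zero_sub] at h₀ h₁
  refine hu (funext fun j => ?_)
  fin_cases j
  exacts [neg_eq_zero.mp h₁.symm, h₀.symm]

lemma NN_single_add_single_self (i : Fin k) : NN k (fun _ => 1) (e i + e i) = 3 := by
  rw [NN, Finset.prod_eq_single i (fun j _ hj => by simp [e, hj]) (by simp)]
  simp [e]

lemma NN_single_add_single {i j : Fin k} (hij : i ≠ j) : NN k (fun _ => 1) (e i + e j) = 4 := by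
  rw [NN, Fintype.prod_eq_mul i j hij (fun l hl => by simp [e, hl.1, hl.2])]
  simp [e, hij, hij.symm]

end ProjectiveLine

section ThreePoints

variable {K : Type} [Field K] {k : ℕ} {P : Fin 3 → PointRep K k fun _ => 1}

lemma GenericPosition.bracket_ne_zero (hP : GenericPosition K P) (i : Fin k) {a b : Fin 3}
    (hab : a ≠ b) : bracket (P a i) (P b i) ≠ 0 := by
  have hthird : ∀ a b : Fin 3, a ≠ b → ∃ c, ∀ x, x = a ∨ x = b ∨ x = c := by decide
  obtain ⟨c, hc⟩ := hthird a b hab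
  intro h
  have h' : bracket (P b i) (P a i) = 0 := by rw [bracket_comm, h, neg_zero]
  have hmem : linearForm i (P a i) * linearForm i (P c i)
      ∈ idealPiece K (idealOfPoints K P) (e i + e i) := by
    refine (mem_idealPiece_idealOfPoints_iff P
      (mul_mem_piece (linearForm_mem_piece i _) (linearForm_mem_piece i _))).mpr fun x => ?_
    rcases hc x with rfl | rfl | rfl <;> simp [bracket_self, h']
  rw [hP.idealPiece_eq_bot (NN_single_add_single_self i).le, Submodule.mem_bot] at hmem
  exact mul_ne_zero (linearForm_ne_zero i (hP.1.1 a i)) (linearForm_ne_zero i (hP.1.1 c i)) hmem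

variable (P) in
noncomputable def bilinearForm (i j : Fin k) : MvPolynomial (Var k fun _ => 1) K :=
  C (bracket (P 0 i) (P 2 i) * bracket (P 0 j) (P 1 j)) *
      (linearForm i (P 1 i) * linearForm j (P 2 j))
    - C (bracket (P 0 i) (P 1 i) * bracket (P 0 j) (P 2 j)) *
      (linearForm i (P 2 i) * linearForm j (P 1 j))

variable (P) in
lemma bilinearForm_mem_idealPiece (i j : Fin k) :
    bilinearForm P i j ∈ idealPiece K (idealOfPoints K P) (e i + e j) := by
  have hmul {u v} : linearForm i u * linearForm j v ∈ piece K k (fun _ => 1) (e i + e j) :=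
    mul_mem_piece (linearForm_mem_piece i u) (linearForm_mem_piece j v)
  refine (mem_idealPiece_idealOfPoints_iff P ((hmul.C_mul _).sub (hmul.C_mul _))).mpr fun a => ?_
  fin_cases a <;>
    simp only [Fin.reduceFinMk, Fin.isValue, map_sub, map_mul, evalAt_C, evalAt_linearForm,
      bracket_self] <;>
    ring

lemma GenericPosition.bilinearForm_ne_zero (hP : GenericPosition K P) {i j : Fin k}
    (hij : i ≠ j) : bilinearForm P i j ≠ 0 := by
  classical
  intro h
  let p : PointRep K k fun _ => 1 := Function.update (P 1) i (P 2 i)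
  have hpi : p i = P 2 i := Function.update_self ..
  have hpj : p j = P 1 j := Function.update_of_ne hij.symm ..
  have := congrArg (evalAt p) h
  simp only [bilinearForm, map_sub, map_mul, evalAt_C, evalAt_linearForm, hpi, hpj, bracket_self,
    mul_zero, sub_zero, map_zero] at this
  simp [hP.bracket_ne_zero] at this

lemma GenericPosition.idealPiece_eq_span_bilinearForm (hP : GenericPosition K P) {i j : Fin k}
    (hij : i ≠ j) : idealPiece K (idealOfPoints K P) (e i + e j) = K ∙ bilinearForm P i j := by
  refine (Submodule.eq_of_le_of_finrank_le
    ((Submodule.span_singleton_le_iff_mem _ _).mpr (bilinearForm_mem_idealPiece P i j)) ?_).symm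
  rw [finrank_span_singleton (hP.bilinearForm_ne_zero hij), hP.finrank_idealPiece three_pos,
    NN_single_add_single hij]

-- `[p, P 0 i] [P 2 i, P 1 i] = 2 [p, P 1 i] [P 2 i, P 0 i]` for `p = fourthPoint P i`:
-- a cross-ratio independent of the factor `i`.
variable (P) in
noncomputable def fourthPoint : PointRep K k fun _ => 1 := fun i =>
  (2 * bracket (P 0 i) (P 1 i) * bracket (P 0 i) (P 2 i)) • P 2 i
    + (bracket (P 2 i) (P 0 i) * bracket (P 2 i) (P 1 i)) • P 0 i

lemma bracket_fourthPoint_zero (i : Fin k) :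
    bracket (fourthPoint P i) (P 0 i)
      = -(2 * bracket (P 0 i) (P 1 i) * bracket (P 0 i) (P 2 i) ^ 2) := by
  simp only [fourthPoint, bracket, Pi.add_apply, Pi.smul_apply, smul_eq_mul]; ring

lemma bracket_fourthPoint_one (i : Fin k) :
    bracket (fourthPoint P i) (P 1 i)
      = -(bracket (P 0 i) (P 1 i) * bracket (P 0 i) (P 2 i) * bracket (P 1 i) (P 2 i)) := by
  simp only [fourthPoint, bracket, Pi.add_apply, Pi.smul_apply, smul_eq_mul]; ring

lemma bracket_fourthPoint_two (i : Fin k) :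
    bracket (fourthPoint P i) (P 2 i)
      = bracket (P 0 i) (P 2 i) ^ 2 * bracket (P 1 i) (P 2 i) := by
  simp only [fourthPoint, bracket, Pi.add_apply, Pi.smul_apply, smul_eq_mul]; ring

variable (P) in
lemma evalAt_fourthPoint_bilinearForm (i j : Fin k) :
    evalAt (fourthPoint P) (bilinearForm P i j) = 0 := by
  simp only [bilinearForm, map_sub, map_mul, evalAt_C, evalAt_linearForm, bracket_fourthPoint_one,
    bracket_fourthPoint_two]
  ring

lemma GenericPosition.bracket_fourthPoint_ne_zero [NeZero (2 : K)] (hP : GenericPosition K P)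
    (a : Fin 3) (i : Fin k) : bracket (fourthPoint P i) (P a i) ≠ 0 := by
  fin_cases a <;>
    simp [bracket_fourthPoint_zero, bracket_fourthPoint_one, bracket_fourthPoint_two,
      hP.bracket_ne_zero, two_ne_zero]

end ThreePoints

section ThreeFactors

variable {K : Type} [Field K] {P : Fin 3 → PointRep K 3 fun _ => 1}

variable (P) in
noncomputable def productForm : MvPolynomial (Var 3 fun _ => 1) K :=
  linearForm 0 (P 0 0) * linearForm 1 (P 1 1) * linearForm 2 (P 2 2)

variable (P) in
lemma productForm_mem_idealPiece :
    productForm P ∈ idealPiece K (idealOfPoints K P) ![1, 1, 1] := by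
  have hdeg : (e 0 + e 1 + e 2 : Fin 3 → ℕ) = ![1, 1, 1] := by decide
  have hmem : productForm P ∈ piece K 3 (fun _ => 1) ![1, 1, 1] := hdeg ▸
    mul_mem_piece (mul_mem_piece (linearForm_mem_piece _ _) (linearForm_mem_piece _ _))
      (linearForm_mem_piece _ _)
  refine (mem_idealPiece_idealOfPoints_iff P hmem).mpr fun a => ?_
  fin_cases a <;> simp [productForm, bracket_self]

lemma GenericPosition.evalAt_fourthPoint_productForm_ne_zero [NeZero (2 : K)]
    (hP : GenericPosition K P) : evalAt (fourthPoint P) (productForm P) ≠ 0 := by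
  simp only [productForm, map_mul, evalAt_linearForm]
  exact mul_ne_zero (mul_ne_zero (hP.bracket_fourthPoint_ne_zero 0 0)
    (hP.bracket_fourthPoint_ne_zero 1 1)) (hP.bracket_fourthPoint_ne_zero 2 2)

lemma NN_le_three_or_eq_single_add_single {d : Fin 3 → ℕ} (hd : d ≤ ![1, 1, 1])
    (hd' : d ≠ ![1, 1, 1]) : NN 3 (fun _ => 1) d ≤ 3 ∨ ∃ i j, i ≠ j ∧ d = e i + e j := by
  obtain ⟨a, b, c, rfl⟩ : ∃ a b c, d = ![a, b, c] :=
    ⟨d 0, d 1, d 2, by funext i; fin_cases i <;> rfl⟩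
  have ha : a ≤ 1 := hd 0
  have hb : b ≤ 1 := hd 1
  have hc : c ≤ 1 := hd 2
  interval_cases a <;> interval_cases b <;> interval_cases c <;> revert hd' <;> decide

lemma GenericPosition.evalAt_fourthPoint_eq_zero (hP : GenericPosition K P) {d : Fin 3 → ℕ}
    (hd : d ≤ ![1, 1, 1]) (hd' : d ≠ ![1, 1, 1]) {f : MvPolynomial (Var 3 fun _ => 1) K}
    (hf : f ∈ idealPiece K (idealOfPoints K P) d) : evalAt (fourthPoint P) f = 0 := by
  rcases NN_le_three_or_eq_single_add_single hd hd' with hNN | ⟨i, j, hij, rfl⟩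
  · rw [hP.idealPiece_eq_bot hNN, Submodule.mem_bot] at hf
    rw [hf, map_zero]
  · rw [hP.idealPiece_eq_span_bilinearForm hij, Submodule.mem_span_singleton] at hf
    obtain ⟨c, rfl⟩ := hf
    rw [smul_eq_C_mul, map_mul, evalAt_fourthPoint_bilinearForm, mul_zero]

end ThreeFactors

theorem three_points_new_generator_general (K : Type) [Field K] [CharZero K]
    (P : Fin 3 → PointRep K 3 (fun _ => 1)) (hgen : GenericPosition K P) :
    -- `(I_X)_{(1,1,1)}` has dimension `8 - 3 = 5`,
    Module.finrank K (idealPiece K (idealOfPoints K P) ![1, 1, 1]) = 5 ∧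
    -- the span of products of lower-degree pieces with linear forms has dimension `≤ 4`,
    Module.finrank K
        ((mulSpan K 0 (idealPiece K (idealOfPoints K P) ![0, 1, 1])
            ⊔ mulSpan K 1 (idealPiece K (idealOfPoints K P) ![1, 0, 1])
            ⊔ mulSpan K 2 (idealPiece K (idealOfPoints K P) ![1, 1, 0]) :
          Submodule K (MvPolynomial (Var 3 (fun _ => 1)) K))) ≤ 4 ∧
    -- in particular it is a proper subspace of `(I_X)_{(1,1,1)}`,
    (mulSpan K 0 (idealPiece K (idealOfPoints K P) ![0, 1, 1])
        ⊔ mulSpan K 1 (idealPiece K (idealOfPoints K P) ![1, 0, 1])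
        ⊔ mulSpan K 2 (idealPiece K (idealOfPoints K P) ![1, 1, 0]))
      ≠ idealPiece K (idealOfPoints K P) ![1, 1, 1] ∧
    -- and consequently `I_X` has a minimal generator of degree `(1,1,1)`
    ∃ f ∈ idealPiece K (idealOfPoints K P) ![1, 1, 1],
      f ∉ Ideal.span (⋃ d ∈ {d : Fin 3 → ℕ | d ≤ ![1, 1, 1] ∧ d ≠ ![1, 1, 1]},
        (idealPiece K (idealOfPoints K P) d : Set (MvPolynomial (Var 3 (fun _ => 1)) K))) := by
  set I := idealOfPoints K P
  set J := Ideal.span (⋃ d ∈ {d : Fin 3 → ℕ | d ≤ ![1, 1, 1] ∧ d ≠ ![1, 1, 1]},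
    (idealPiece K I d : Set (MvPolynomial (Var 3 (fun _ => 1)) K)))
  set W := mulSpan K 0 (idealPiece K I ![0, 1, 1]) ⊔ mulSpan K 1 (idealPiece K I ![1, 0, 1])
    ⊔ mulSpan K 2 (idealPiece K I ![1, 1, 0])
  have hJ : J ≤ RingHom.ker (evalAt (fourthPoint P)) := by
    refine Ideal.span_le.mpr fun f hf => ?_
    obtain ⟨d, ⟨hd, hd'⟩, hfd⟩ := Set.mem_iUnion₂.mp hf
    exact hgen.evalAt_fourthPoint_eq_zero hd hd' hfd
  have hgJ : productForm P ∉ J := fun h => hgen.evalAt_fourthPoint_productForm_ne_zero (hJ h)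
  have hlower {d : Fin 3 → ℕ} (hd : ∀ i, d i ≤ ![1, 1, 1] i) (hd' : d ≠ ![1, 1, 1]) :
      idealPiece K I d ≤ J.restrictScalars K := fun _ hf =>
    Ideal.subset_span (Set.mem_biUnion (x := d) ⟨hd, hd'⟩ hf)
  have hWJ : W ≤ J.restrictScalars K :=
    sup_le (sup_le (mulSpan_le_restrictScalars (hlower (by decide) (by decide)))
      (mulSpan_le_restrictScalars (hlower (by decide) (by decide))))
      (mulSpan_le_restrictScalars (hlower (by decide) (by decide)))
  have hWV : W ≤ idealPiece K I ![1, 1, 1] :=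
    sup_le (sup_le (mulSpan_idealPiece_le I (by decide)) (mulSpan_idealPiece_le I (by decide)))
      (mulSpan_idealPiece_le I (by decide))
  have hlt : W < idealPiece K I ![1, 1, 1] :=
    lt_of_le_of_ne hWV fun h => hgJ (hWJ (h ▸ productForm_mem_idealPiece P))
  have h5 : Module.finrank K (idealPiece K I ![1, 1, 1]) = 5 := by
    rw [hgen.finrank_idealPiece three_pos]; rfl
  have h4 := Submodule.finrank_lt_finrank_of_lt hlt
  exact ⟨h5, by omega, hlt.ne, productForm P, productForm_mem_idealPiece P, hgJ⟩

theorem three_points_new_generator (K : Type) [Field K] [IsAlgClosed K] [CharZero K]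
    (P : Fin 3 → PointRep K 3 (fun _ => 1)) (hgen : GenericPosition K P) :
    -- `(I_X)_{(1,1,1)}` has dimension `8 - 3 = 5`,
    Module.finrank K (idealPiece K (idealOfPoints K P) ![1, 1, 1]) = 5 ∧
    -- the span of products of lower-degree pieces with linear forms has dimension `≤ 4`,
    Module.finrank K
        ((mulSpan K 0 (idealPiece K (idealOfPoints K P) ![0, 1, 1])
            ⊔ mulSpan K 1 (idealPiece K (idealOfPoints K P) ![1, 0, 1])
            ⊔ mulSpan K 2 (idealPiece K (idealOfPoints K P) ![1, 1, 0]) :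
          Submodule K (MvPolynomial (Var 3 (fun _ => 1)) K))) ≤ 4 ∧
    -- in particular it is a proper subspace of `(I_X)_{(1,1,1)}`,
    (mulSpan K 0 (idealPiece K (idealOfPoints K P) ![0, 1, 1])
        ⊔ mulSpan K 1 (idealPiece K (idealOfPoints K P) ![1, 0, 1])
        ⊔ mulSpan K 2 (idealPiece K (idealOfPoints K P) ![1, 1, 0]))
      ≠ idealPiece K (idealOfPoints K P) ![1, 1, 1] ∧
    -- and consequently `I_X` has a minimal generator of degree `(1,1,1)`
    ∃ f ∈ idealPiece K (idealOfPoints K P) ![1, 1, 1],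
      f ∉ Ideal.span (⋃ d ∈ {d : Fin 3 → ℕ | d ≤ ![1, 1, 1] ∧ d ≠ ![1, 1, 1]},
        (idealPiece K (idealOfPoints K P) d : Set (MvPolynomial (Var 3 (fun _ => 1)) K))) :=
  three_points_new_generator_general K P hgen

end MultiProjPoints
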